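/- Let (D, g, h) be a Czech hat game on a finite vertex set and let v be a vertex such that h v > g v · ∏_{u ∈ N⁺(v)} h u, where N⁺(v) = {u | D.Adj v u}. Then v is deletable. -/
import Mathlib


/-- A Czech hat game on the digraph with adjacency `D` (sage `v` sees sage `u`
iff `D v u`), guessness `g`, and hatness `h`, is winnable: there is a strategy
assigning to each sage `v` a set of `g v` guesses, depending only on the hats
she sees, such that for every coloring some sage guesses her own hat color. -/
def HatGame.Winnable {V : Type*} (D : V → V → Prop) (g h : V → ℕ) : Prop :=
  ∃ F : ∀ v : V, (∀ u : V, Fin (h u)) → Finset (Fin (h v)),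
    (∀ (v : V) (c c' : ∀ u : V, Fin (h u)),
        (∀ u : V, D v u → c u = c' u) → F v c = F v c') ∧
    (∀ (v : V) (c : ∀ u : V, Fin (h u)), (F v c).card = g v) ∧
    (∀ c : ∀ u : V, Fin (h u), ∃ v : V, c v ∈ F v c)

/-- A vertex seeing too few hats relative to its ratio `h v / g v` is deletable. -/
theorem deletable_of_high_ratio {V : Type*} [Fintype V]
    (D : V → V → Prop) [DecidableRel D] (hloop : ∀ v, ¬ D v v)
    (g h : V → ℕ) (hgh : ∀ v, 0 < g v ∧ g v < h v) (v : V)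
    (hv : h v > g v * ∏ u ∈ Finset.univ.filter (fun u => D v u), h u) :
    (HatGame.Winnable (fun a b : {w : V // w ≠ v} => D a b)
        (fun a => g a) (fun a => h a) ↔
      HatGame.Winnable D g h) := by
  classical
  have hpos : ∀ u, 0 < h u := fun u => (hgh u).1.trans (hgh u).2
  constructor
  · -- restricted winnable → full winnable
    rintro ⟨F', hdep, hcard, hwin⟩
    refine ⟨fun w c => if hw : w = v then
        (Finset.univ : Finset (Fin (g w))).map (Fin.castLEEmb (le_of_lt (hgh w).2))
      else F' ⟨w, hw⟩ (fun u => c u.1), ?_, ?_, ?_⟩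
    · intro w c c' hcc
      by_cases hw : w = v
      · simp [hw]
      · simp only [dif_neg hw]
        exact hdep ⟨w, hw⟩ _ _ (fun u hu => hcc u.1 hu)
    · intro w c
      by_cases hw : w = v
      · simp [hw]
      · simp only [dif_neg hw]
        exact hcard ⟨w, hw⟩ _
    · intro c
      obtain ⟨w, hw⟩ := hwin (fun u => c u.1)
      refine ⟨w.1, ?_⟩
      simp only [dif_neg w.2]
      convert hw
  · -- full winnable → restricted winnable
    rintro ⟨F, hdep, hcard, hwin⟩
    -- find a color at v never guessed by v
    set N : Finset V := Finset.univ.filter (fun u => D v u) with hN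
    let ext : (∀ u : {u : V // D v u}, Fin (h u.1)) → (∀ u : V, Fin (h u)) :=
      fun d u => if hd : D v u then d ⟨u, hd⟩ else ⟨0, hpos u⟩
    let T : Finset (Fin (h v)) :=
      (Finset.univ : Finset (∀ u : {u : V // D v u}, Fin (h u.1))).biUnion
        (fun d => F v (ext d))
    have hTcard : T.card < h v := by
      calc T.card ≤ ∑ d : (∀ u : {u : V // D v u}, Fin (h u.1)), (F v (ext d)).card :=
            Finset.card_biUnion_le
        _ = (Fintype.card (∀ u : {u : V // D v u}, Fin (h u.1))) * g v := by
            simp [hcard, Finset.sum_const, Finset.card_univ, mul_comm]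
        _ = (∏ u : {u : V // D v u}, h u.1) * g v := by
            rw [Fintype.card_pi]; simp
        _ = g v * ∏ u ∈ N, h u := by
            rw [mul_comm]
            congr 1
            exact (Finset.prod_subtype N (by simp [hN]) h).symm
        _ < h v := hv
    have ⟨a, haT⟩ : ∃ a : Fin (h v), a ∉ T := by
      by_contra hcon
      push_neg at hcon
      have : (Finset.univ : Finset (Fin (h v))).card ≤ T.card :=
        Finset.card_le_card (fun x _ => hcon x)
      simp only [Finset.card_univ, Fintype.card_fin] at this
      omega
    have hafree : ∀ c : ∀ u : V, Fin (h u), a ∉ F v c := by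
      intro c hc
      apply haT
      refine Finset.mem_biUnion.2 ⟨fun u => c u.1, Finset.mem_univ _, ?_⟩
      have : F v c = F v (ext (fun u => c u.1)) := by
        apply hdep
        intro u hu
        simp only [ext, dif_pos hu]
      rwa [← this]
    -- extend a restricted coloring by `a` at v
    let extc : (∀ u : {w : V // w ≠ v}, Fin (h u.1)) → (∀ u : V, Fin (h u)) :=
      fun c' u => if hu : u = v then ⟨a.1, by rw [hu]; exact a.2⟩ else c' ⟨u, hu⟩
    refine ⟨fun w c' => F w.1 (extc c'), ?_, ?_, ?_⟩
    · intro w c' c'' hcc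
      apply hdep
      intro u hu
      by_cases huv : u = v
      · simp [extc, dif_pos huv]
      · simp only [extc, dif_neg huv]
        exact hcc ⟨u, huv⟩ hu
    · intro w c'
      exact hcard w.1 _
    · intro c'
      obtain ⟨w, hw⟩ := hwin (extc c')
      have hwv : w ≠ v := by
        intro hwv
        subst hwv
        apply hafree (extc c')
        have : extc c' w = a := by
          simp only [extc, dif_pos rfl]
        rwa [this] at hw
      refine ⟨⟨w, hwv⟩, ?_⟩
      have : c' ⟨w, hwv⟩ = extc c' w := by
        simp only [extc, dif_neg hwv]
      rw [this]
      exact hw
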